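/- Let G be a finite simple graph and let x ∈ V(G). Then 0 ≤ gcol(G) − gcol(G − x) ≤ 2, i.e., gcol(G − x) ≤ gcol(G) ≤ gcol(G − x) + 2, where G − x denotes the induced subgraph of G obtained by deleting the vertex x. -/

import Mathlib

open scoped Classical

/-- The number of backneighbors of `v` with respect to the ordering `τ`:
neighbors of `v` in `G` that appear (strictly) before `v` in `τ`. -/
noncomputable def backDeg {V : Type*} [Fintype V] (G : SimpleGraph V)
    (τ : List V) (v : V) : ℕ :=
  (Finset.univ.filter (fun u =>
    G.Adj v u ∧ ∃ i j : Fin τ.length, i < j ∧ τ.get i = u ∧ τ.get j = v)).card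

/-- `col(G, τ)`: the maximum over all vertices `v` of
`1 +` (the number of backneighbors of `v` with respect to `τ`). -/
noncomputable def colOrd {V : Type*} [Fintype V] (G : SimpleGraph V)
    (τ : List V) : ℕ :=
  Finset.univ.sup (fun v => 1 + backDeg G τ v)

/-- The minimax value of the ordering game on `G` continued from the position
(partial ordering) `σ`, where `alice = true` means it is Alice's turn to choose
an unchosen vertex (Alice minimizes the final score `colOrd G τ`, Bob
maximizes it).  This value is the least `s` such that the player-to-move's
opponent-robust guarantee holds, i.e. the least `s` such that Alice has a
strategy from this position guaranteeing a score of at most `s`. -/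
noncomputable def gameVal {V : Type*} [Fintype V] (G : SimpleGraph V)
    (alice : Bool) (σ : List V) : ℕ :=
  if h : (Finset.univ.filter (fun v : V => v ∉ σ)).Nonempty then
    if alice then
      (Finset.univ.filter (fun v : V => v ∉ σ)).attach.inf'
        (Finset.attach_nonempty_iff.mpr h)
        (fun v => gameVal G false (σ ++ [v.1]))
    else
      (Finset.univ.filter (fun v : V => v ∉ σ)).attach.sup'
        (Finset.attach_nonempty_iff.mpr h)
        (fun v => gameVal G true (σ ++ [v.1]))
  else colOrd G σ
termination_by (Finset.univ.filter (fun v : V => v ∉ σ)).card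
decreasing_by
  all_goals {
    have hv : ↑v ∉ σ := (Finset.mem_filter.mp v.2).2
    apply Finset.card_lt_card
    constructor
    · intro u hu
      simp only [Finset.mem_filter, List.mem_append] at hu ⊢
      exact ⟨hu.1, fun h' => hu.2 (Or.inl h')⟩
    · intro hsub
      have := hsub (Finset.mem_filter.mpr ⟨Finset.mem_univ _, hv⟩)
      simp at this }

/-- The game coloring number of `G`: the value of the ordering game on `G`
with Alice moving first (also written `gcol_A`). -/
noncomputable def gcol {V : Type*} [Fintype V] (G : SimpleGraph V) : ℕ :=
  gameVal G true []

/-- The value of the Bob ordering game on `G` (Bob moves first). -/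
noncomputable def gcolB {V : Type*} [Fintype V] (G : SimpleGraph V) : ℕ :=
  gameVal G false []

/-- The `σ`-game coloring number of `G`: the value of the `σ`-preordered
ordering game, in which Alice moves first if `|σ|` is even and Bob moves
first if `|σ|` is odd. -/
noncomputable def sigmaGcol {V : Type*} [Fintype V] (G : SimpleGraph V)
    (σ : List V) : ℕ :=
  if Even σ.length then gameVal G true σ else gameVal G false σ

/-- The Alice `σ`-game coloring number: the value of the `σ`-preordered game
in which Alice moves first. -/
noncomputable def sigmaGcolA {V : Type*} [Fintype V] (G : SimpleGraph V)
    (σ : List V) : ℕ :=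
  gameVal G true σ

/-- The Bob `σ`-game coloring number: the value of the `σ`-preordered game
in which Bob moves first. -/
noncomputable def sigmaGcolB {V : Type*} [Fintype V] (G : SimpleGraph V)
    (σ : List V) : ℕ :=
  gameVal G false σ




/-- `u` occurs strictly before (an occurrence of) `v` in `τ`. -/
def pairCond {α : Type*} (τ : List α) (u v : α) : Prop :=
  ∃ i j : Fin τ.length, i < j ∧ τ.get i = u ∧ τ.get j = v

namespace pairCond
variable {α β : Type*} {τ ρ σ : List α} {u v : α}

lemma mem_left (h : pairCond τ u v) : u ∈ τ := by
  obtain ⟨i, j, _, hi, _⟩ := h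
  subst hi; exact List.get_mem τ _
lemma mem_right (h : pairCond τ u v) : v ∈ τ := by
  obtain ⟨i, j, _, _, hj⟩ := h
  subst hj; exact List.get_mem τ _

lemma single {e : α} : ¬ pairCond [e] u v := by
  rintro ⟨i, j, hij, -, -⟩
  have hi : (i : ℕ) < 1 := i.2
  have hj : (j : ℕ) < 1 := j.2
  have : (i : ℕ) < (j : ℕ) := hij
  omega

lemma of_get {τ : List α} {i j : ℕ} (hij : i < j) (hj : j < τ.length)
    (hu : τ.get ⟨i, lt_trans hij hj⟩ = u) (hv : τ.get ⟨j, hj⟩ = v) :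
    pairCond τ u v :=
  ⟨⟨i, lt_trans hij hj⟩, ⟨j, hj⟩, hij, hu, hv⟩

lemma intro' (hu : u ∈ σ) (hv : v ∈ ρ) : pairCond (σ ++ ρ) u v := by
  obtain ⟨⟨i, hi⟩, hui⟩ := List.mem_iff_get.mp hu
  obtain ⟨⟨j, hj⟩, hvj⟩ := List.mem_iff_get.mp hv
  refine ⟨⟨i, ?_⟩, ⟨σ.length + j, ?_⟩, ?_, ?_, ?_⟩
  · simp [List.length_append]; omega
  · simp [List.length_append]; omega
  · simp [Fin.lt_def]; omega
  · simp only [List.get_eq_getElem] at hui ⊢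
    rw [List.getElem_append_left hi]; exact hui
  · simp only [List.get_eq_getElem] at hvj ⊢
    rw [List.getElem_append_right (by omega)]
    simpa using hvj

lemma append_left (h : pairCond σ u v) : pairCond (σ ++ ρ) u v := by
  obtain ⟨⟨i, hi⟩, ⟨j, hj⟩, hij, hu, hv⟩ := h
  refine ⟨⟨i, ?_⟩, ⟨j, ?_⟩, ?_, ?_, ?_⟩
  · simp [List.length_append]; omega
  · simp [List.length_append]; omega
  · simpa using hij
  · simp only [List.get_eq_getElem] at hu ⊢; rw [List.getElem_append_left hi]; exact hu
  · simp only [List.get_eq_getElem] at hv ⊢; rw [List.getElem_append_left hj]; exact hv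

lemma append_right (h : pairCond ρ u v) : pairCond (σ ++ ρ) u v := by
  obtain ⟨⟨i, hi⟩, ⟨j, hj⟩, hij, hu, hv⟩ := h
  have hij' : i < j := hij
  refine ⟨⟨σ.length + i, ?_⟩, ⟨σ.length + j, ?_⟩, ?_, ?_, ?_⟩
  · simp [List.length_append]; omega
  · simp [List.length_append]; omega
  · simp [Fin.lt_def]; omega
  · simp only [List.get_eq_getElem] at hu ⊢
    rw [List.getElem_append_right (by omega)]; simpa using hu
  · simp only [List.get_eq_getElem] at hv ⊢
    rw [List.getElem_append_right (by omega)]; simpa using hv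

lemma elim (h : pairCond (σ ++ ρ) u v) :
    pairCond σ u v ∨ pairCond ρ u v ∨ (u ∈ σ ∧ v ∈ ρ) := by
  obtain ⟨⟨i, hi⟩, ⟨j, hj⟩, hij, hu, hv⟩ := h
  simp only [List.get_eq_getElem] at hu hv
  simp only [List.length_append] at hi hj
  have hij' : i < j := hij
  by_cases hjσ : j < σ.length
  · left
    refine ⟨⟨i, by omega⟩, ⟨j, hjσ⟩, by simpa using hij', ?_, ?_⟩
    · simp only [List.get_eq_getElem]
      rw [← hu, List.getElem_append_left (by omega)]
    · simp only [List.get_eq_getElem]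
      rw [← hv, List.getElem_append_left hjσ]
  · by_cases hiσ : i < σ.length
    · right; right
      constructor
      · rw [← hu, List.getElem_append_left hiσ]; exact List.getElem_mem _
      · rw [← hv, List.getElem_append_right (by omega)]; exact List.getElem_mem _
    · right; left
      refine ⟨⟨i - σ.length, by omega⟩, ⟨j - σ.length, by omega⟩, by simp [Fin.lt_def]; omega, ?_, ?_⟩
      · simp only [List.get_eq_getElem]
        rw [← hu, List.getElem_append_right (by omega)]
      · simp only [List.get_eq_getElem]
        rw [← hv, List.getElem_append_right (by omega)]

lemma map {f : α → β} (h : pairCond τ u v) : pairCond (τ.map f) (f u) (f v) := by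
  obtain ⟨⟨i, hi⟩, ⟨j, hj⟩, hij, hu, hv⟩ := h
  refine ⟨⟨i, by simpa using hi⟩, ⟨j, by simpa using hj⟩, by simpa using hij, ?_, ?_⟩
  · simp only [List.get_eq_getElem] at hu ⊢; rw [List.getElem_map]; rw [hu]
  · simp only [List.get_eq_getElem] at hv ⊢; rw [List.getElem_map]; rw [hv]

lemma of_map {f : α → β} (hf : Function.Injective f)
    (h : pairCond (τ.map f) (f u) (f v)) : pairCond τ u v := by
  obtain ⟨⟨i, hi⟩, ⟨j, hj⟩, hij, hu, hv⟩ := h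
  simp only [List.length_map] at hi hj
  refine ⟨⟨i, hi⟩, ⟨j, hj⟩, by simpa using hij, ?_, ?_⟩
  · simp only [List.get_eq_getElem] at hu ⊢
    rw [List.getElem_map] at hu; exact hf hu
  · simp only [List.get_eq_getElem] at hv ⊢
    rw [List.getElem_map] at hv; exact hf hv

lemma not_head {e : α} (hv : v ∉ τ) : ¬ pairCond (e :: τ) u v := by
  intro h
  rcases elim (σ := [e]) (ρ := τ) h with h1 | h1 | h1
  · exact single h1
  · exact hv h1.mem_right
  · rcases h1 with ⟨-, h1⟩; exact hv h1

end pairCond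


section Aux
variable {V : Type*} [Fintype V] {W : Type*} [Fintype W]

lemma backDeg_eq (G : SimpleGraph V) (τ : List V) (v : V) :
    backDeg G τ v = (Finset.univ.filter (fun u => G.Adj v u ∧ pairCond τ u v)).card := by
  unfold backDeg pairCond; congr!

lemma backDeg_le_of_forall (G : SimpleGraph V) {τ τ' : List V} {v : V}
    (h : ∀ u, G.Adj v u → pairCond τ u v → pairCond τ' u v) :
    backDeg G τ v ≤ backDeg G τ' v := by
  rw [backDeg_eq, backDeg_eq]
  apply Finset.card_le_card
  intro u hu
  simp only [Finset.mem_filter, Finset.mem_univ, true_and] at hu ⊢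
  exact ⟨hu.1, h u hu.1 hu.2⟩

lemma backDeg_le_of_forall_add (G : SimpleGraph V) {τ τ' : List V} {v : V} (u₀ : V)
    (h : ∀ u, u ≠ u₀ → G.Adj v u → pairCond τ u v → pairCond τ' u v) :
    backDeg G τ v ≤ backDeg G τ' v + 1 := by
  rw [backDeg_eq, backDeg_eq]
  set A := Finset.univ.filter (fun u => G.Adj v u ∧ pairCond τ u v) with hA
  set B := Finset.univ.filter (fun u => G.Adj v u ∧ pairCond τ' u v) with hB
  have h1 : A ⊆ insert u₀ B := by
    intro u hu
    simp only [hA, Finset.mem_filter, Finset.mem_univ, true_and] at hu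
    by_cases hu0 : u = u₀
    · simp [hu0]
    · simp only [Finset.mem_insert, hB, Finset.mem_filter, Finset.mem_univ, true_and]
      exact Or.inr ⟨hu.1, h u hu0 hu.1 hu.2⟩
  calc A.card ≤ (insert u₀ B).card := Finset.card_le_card h1
    _ ≤ B.card + 1 := Finset.card_insert_le _ _

/-- cross-graph version via an injective adjacency-preserving map -/
lemma backDeg_le_map (K : SimpleGraph W) (G : SimpleGraph V) (φ : W → V)
    (hφ : Function.Injective φ) {τ : List W} {τ' : List V} {v : W}
    (hadj : ∀ u, K.Adj v u → G.Adj (φ v) (φ u))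
    (h : ∀ u, K.Adj v u → pairCond τ u v → pairCond τ' (φ u) (φ v)) :
    backDeg K τ v ≤ backDeg G τ' (φ v) := by
  rw [backDeg_eq, backDeg_eq]
  apply Finset.card_le_card_of_injOn φ
  · intro u hu
    simp only [Finset.mem_coe, Finset.mem_filter, Finset.mem_univ, true_and] at hu ⊢
    exact ⟨hadj u hu.1, h u hu.1 hu.2⟩
  · exact fun a _ b _ hab => hφ hab

/-- reverse cross-graph version, with one exceptional vertex allowed -/
lemma backDeg_map_le_add (K : SimpleGraph W) (G : SimpleGraph V) (φ : W → V)
    {τ : List W} {τ' : List V} {v : W} (u₀ : V)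
    (h : ∀ u, u ≠ u₀ → G.Adj (φ v) u → pairCond τ' u (φ v) →
      ∃ u' : W, φ u' = u ∧ K.Adj v u' ∧ pairCond τ u' v) :
    backDeg G τ' (φ v) ≤ backDeg K τ v + 1 := by
  rw [backDeg_eq, backDeg_eq]
  set A := Finset.univ.filter (fun u => G.Adj (φ v) u ∧ pairCond τ' u (φ v)) with hA
  set B := Finset.univ.filter (fun u => K.Adj v u ∧ pairCond τ u v) with hB
  have h1 : A.erase u₀ ⊆ B.image φ := by
    intro u hu
    simp only [Finset.mem_erase, hA, Finset.mem_filter, Finset.mem_univ, true_and] at hu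
    obtain ⟨u', hu'1, hu'2, hu'3⟩ := h u hu.1 hu.2.1 hu.2.2
    simp only [Finset.mem_image, hB, Finset.mem_filter, Finset.mem_univ, true_and]
    exact ⟨u', ⟨hu'2, hu'3⟩, hu'1⟩
  have h2 : A ⊆ insert u₀ (A.erase u₀) := by
    intro u hu
    by_cases h0 : u = u₀
    · simp [h0]
    · exact Finset.mem_insert_of_mem (Finset.mem_erase.mpr ⟨h0, hu⟩)
  calc A.card ≤ (insert u₀ (A.erase u₀)).card := Finset.card_le_card h2
    _ ≤ (A.erase u₀).card + 1 := Finset.card_insert_le _ _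
    _ ≤ (B.image φ).card + 1 := by
        exact Nat.add_le_add_right (Finset.card_le_card h1) 1
    _ ≤ B.card + 1 := Nat.add_le_add_right (Finset.card_image_le) 1

lemma backDeg_le_degree (G : SimpleGraph V) (τ : List V) (v : V) :
    backDeg G τ v ≤ G.degree v := by
  rw [backDeg_eq, ← SimpleGraph.card_neighborFinset_eq_degree]
  apply Finset.card_le_card
  intro u hu
  simp only [Finset.mem_filter] at hu
  rw [SimpleGraph.mem_neighborFinset]
  exact hu.2.1

lemma degree_le_backDeg (G : SimpleGraph V) {σ : List V} {z : V}
    (h : ∀ u, G.Adj z u → u ∈ σ) :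
    G.degree z ≤ backDeg G (σ ++ [z]) z := by
  rw [backDeg_eq, ← SimpleGraph.card_neighborFinset_eq_degree]
  apply Finset.card_le_card
  intro u hu
  rw [SimpleGraph.mem_neighborFinset] at hu
  simp only [Finset.mem_filter, Finset.mem_univ, true_and]
  exact ⟨hu, pairCond.intro' (h u hu) (by simp)⟩

lemma backDeg_head_eq_zero (G : SimpleGraph V) {τ : List V} {x : V} (hx : x ∉ τ) :
    backDeg G (x :: τ) x = 0 := by
  rw [backDeg_eq, Finset.card_eq_zero, Finset.filter_eq_empty_iff]
  intro u _
  rintro ⟨-, hpc⟩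
  exact pairCond.not_head hx hpc

lemma le_colOrd (G : SimpleGraph V) (τ : List V) (v : V) :
    1 + backDeg G τ v ≤ colOrd G τ :=
  Finset.le_sup (f := fun v => 1 + backDeg G τ v) (Finset.mem_univ v)

lemma colOrd_le (G : SimpleGraph V) {τ : List V} {s : ℕ}
    (h : ∀ v, 1 + backDeg G τ v ≤ s) : colOrd G τ ≤ s :=
  Finset.sup_le fun v _ => h v

lemma colOrd_exists (G : SimpleGraph V) {τ : List V} {s : ℕ}
    (hs : 1 ≤ s) (h : s ≤ colOrd G τ) : ∃ v, s ≤ 1 + backDeg G τ v := by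
  rcases Finset.univ.eq_empty_or_nonempty (α := V) with he | hne
  · exfalso
    rw [colOrd, he] at h
    simp at h; omega
  · obtain ⟨v, -, hv⟩ := Finset.exists_mem_eq_sup Finset.univ hne
      (fun v => 1 + backDeg G τ v)
    exact ⟨v, by rw [colOrd, hv] at h; exact h⟩

end Aux

section Game
variable {V : Type*} [Fintype V]

/-- unplayed vertices -/
noncomputable abbrev unp (σ : List V) : Finset V := Finset.univ.filter (fun v => v ∉ σ)

lemma mem_unp {σ : List V} {v : V} : v ∈ unp σ ↔ v ∉ σ := by simp [unp]

lemma unp_append {σ : List V} {v : V} (hv : v ∉ σ) :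
    unp (σ ++ [v]) = (unp σ).erase v := by
  ext u
  simp only [unp, Finset.mem_filter, Finset.mem_univ, true_and, Finset.mem_erase,
    List.mem_append, List.mem_singleton]
  tauto

lemma unp_card_succ {σ : List V} {v : V} (hv : v ∉ σ) :
    (unp (σ ++ [v])).card + 1 = (unp σ).card := by
  rw [unp_append hv]
  exact Finset.card_erase_add_one (mem_unp.mpr hv)

lemma unp_append_subset {σ : List V} {v : V} : unp (σ ++ [v]) ⊆ unp σ := by
  intro u hu
  rw [mem_unp] at hu ⊢
  intro h; exact hu (by simp [h])

variable (G : SimpleGraph V)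

lemma gameVal_terminal {σ : List V} (h : ¬ (unp σ).Nonempty) (b : Bool) :
    gameVal G b σ = colOrd G σ := by
  rw [gameVal]; exact dif_neg h

lemma gameVal_true_le {σ : List V} {v : V} (hv : v ∈ unp σ) :
    gameVal G true σ ≤ gameVal G false (σ ++ [v]) := by
  have hne : (unp σ).Nonempty := ⟨v, hv⟩
  rw [gameVal, dif_pos hne, if_pos rfl]
  exact Finset.inf'_le _ (Finset.mem_attach _ ⟨v, hv⟩)

lemma le_gameVal_true {σ : List V} {s : ℕ} (hne : (unp σ).Nonempty)
    (h : ∀ v ∈ unp σ, s ≤ gameVal G false (σ ++ [v])) : s ≤ gameVal G true σ := by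
  rw [gameVal, dif_pos hne, if_pos rfl]
  exact Finset.le_inf' _ _ (fun b _ => h b.1 b.2)

lemma gameVal_true_exists {σ : List V} (hne : (unp σ).Nonempty) :
    ∃ v ∈ unp σ, gameVal G true σ = gameVal G false (σ ++ [v]) := by
  rw [gameVal, dif_pos hne, if_pos rfl]
  obtain ⟨b, -, hb⟩ := Finset.exists_mem_eq_inf'
    (Finset.attach_nonempty_iff.mpr hne) (fun v => gameVal G false (σ ++ [v.1]))
  exact ⟨b.1, b.2, hb⟩

lemma le_gameVal_false {σ : List V} {v : V} (hv : v ∈ unp σ) :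
    gameVal G true (σ ++ [v]) ≤ gameVal G false σ := by
  have hne : (unp σ).Nonempty := ⟨v, hv⟩
  conv_rhs => rw [gameVal]
  rw [dif_pos hne, if_neg (by simp)]
  exact Finset.le_sup' (fun v' : {u // u ∈ unp σ} => gameVal G true (σ ++ [v'.1]))
    (Finset.mem_attach _ ⟨v, hv⟩)

lemma gameVal_false_le {σ : List V} {s : ℕ} (hne : (unp σ).Nonempty)
    (h : ∀ v ∈ unp σ, gameVal G true (σ ++ [v]) ≤ s) : gameVal G false σ ≤ s := by
  rw [gameVal, dif_pos hne, if_neg (by simp)]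
  exact Finset.sup'_le _ _ (fun b _ => h b.1 b.2)

lemma gameVal_false_exists {σ : List V} (hne : (unp σ).Nonempty) :
    ∃ v ∈ unp σ, gameVal G false σ = gameVal G true (σ ++ [v]) := by
  rw [gameVal, dif_pos hne, if_neg (by simp)]
  obtain ⟨b, -, hb⟩ := Finset.exists_mem_eq_sup'
    (Finset.attach_nonempty_iff.mpr hne) (fun v => gameVal G true (σ ++ [v.1]))
  exact ⟨b.1, b.2, hb⟩

lemma colOrd_mono_append (σ ρ : List V) : colOrd G σ ≤ colOrd G (σ ++ ρ) := by
  apply colOrd_le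
  intro v
  have h := backDeg_le_of_forall G (τ := σ) (τ' := σ ++ ρ) (v := v)
    (fun u _ hpc => hpc.append_left)
  calc 1 + backDeg G σ v ≤ 1 + backDeg G (σ ++ ρ) v := by omega
    _ ≤ colOrd G (σ ++ ρ) := le_colOrd G _ v

lemma colOrd_le_gameVal : ∀ (n : ℕ) (σ : List V) (b : Bool), (unp σ).card = n →
    colOrd G σ ≤ gameVal G b σ := by
  intro n
  induction n using Nat.strong_induction_on with
  | _ n IH =>
    intro σ b hcard
    by_cases hne : (unp σ).Nonempty
    · obtain ⟨v, hv⟩ := hne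
      have key : ∀ u ∈ unp σ, colOrd G σ ≤ gameVal G (!b) (σ ++ [u]) := by
        intro u hu
        have hcard' : (unp (σ ++ [u])).card < n := by
          have := unp_card_succ (σ := σ) (v := u) (mem_unp.mp hu); omega
        calc colOrd G σ ≤ colOrd G (σ ++ [u]) := colOrd_mono_append G σ [u]
          _ ≤ gameVal G (!b) (σ ++ [u]) := IH _ hcard' _ _ rfl
      cases b with
      | true => exact le_gameVal_true G ⟨v, hv⟩ key
      | false =>
        calc colOrd G σ ≤ gameVal G true (σ ++ [v]) := key v hv
          _ ≤ gameVal G false σ := le_gameVal_false G hv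
    · rw [gameVal_terminal G hne]

lemma gameVal_ge_of_min_degree : ∀ (n : ℕ) {s : ℕ} (σ : List V) (b : Bool),
    (unp σ).card = n → (unp σ).Nonempty → (∀ u ∈ unp σ, s ≤ G.degree u + 1) →
    s ≤ gameVal G b σ := by
  intro n
  induction n using Nat.strong_induction_on with
  | _ n IH =>
    intro s σ b hcard hne hdeg
    have key : ∀ v ∈ unp σ, s ≤ gameVal G (!b) (σ ++ [v]) := by
      intro v hv
      by_cases hne' : (unp (σ ++ [v])).Nonempty
      · exact IH _ (by have := unp_card_succ (mem_unp.mp hv); omega) _ _ rfl hne'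
          (fun u hu => hdeg u (unp_append_subset hu))
      · rw [gameVal_terminal G hne']
        have hall : ∀ u, G.Adj v u → u ∈ σ := by
          intro u hadj
          have hu : u ∈ σ ++ [v] := by
            by_contra hcon
            exact hne' ⟨u, mem_unp.mpr hcon⟩
          rcases List.mem_append.mp hu with h | h
          · exact h
          · exact absurd (List.mem_singleton.mp h) hadj.ne'
        have h1 := degree_le_backDeg G hall
        have h2 := le_colOrd G (σ ++ [v]) v
        have h3 := hdeg v hv
        omega
    cases b with
    | true => exact le_gameVal_true G hne key
    | false =>
      obtain ⟨v, hv⟩ := hne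
      calc s ≤ gameVal G true (σ ++ [v]) := key v hv
        _ ≤ gameVal G false σ := le_gameVal_false G hv

/-- moving `e` earlier preserves all before-pairs except those with `v = e` -/
lemma pc_shift_e {α : Type*} {σ π ρ : List α} {e u v : α} (hv : v ≠ e)
    (hpc : pairCond (σ ++ (π ++ ([e] ++ ρ))) u v) :
    pairCond (σ ++ ([e] ++ (π ++ ρ))) u v := by
  rcases hpc.elim with h | h | ⟨hu, hvm⟩
  · exact h.append_left
  · rcases h.elim with h | h | ⟨hu, hvm⟩
    · exact pairCond.append_right (pairCond.append_right h.append_left)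
    · rcases h.elim with h | h | ⟨hu, hvm⟩
      · exact absurd h pairCond.single
      · exact pairCond.append_right (pairCond.append_right (pairCond.append_right h))
      · have hu' : u = e := List.mem_singleton.mp hu
        subst hu'
        exact pairCond.append_right (pairCond.intro' (by simp) (List.mem_append_right _ hvm))
    · rcases List.mem_append.mp hvm with h | h
      · exact absurd (List.mem_singleton.mp h) hv
      · exact pairCond.append_right
          (pairCond.append_right (pairCond.intro' hu h))
  · have hvm' : v ∈ [e] ++ (π ++ ρ) := by
      rcases List.mem_append.mp hvm with h | h
      · exact List.mem_append_right _ (List.mem_append_left _ h)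
      · rcases List.mem_append.mp h with h | h
        · exact absurd (List.mem_singleton.mp h) hv
        · exact List.mem_append_right _ (List.mem_append_right _ h)
    exact pairCond.intro' hu hvm'

lemma colOrd_transfer {σ π ρ : List V} {e : V} {s : ℕ}
    (hdeg : G.degree e + 2 ≤ s)
    (h : s ≤ colOrd G (σ ++ (π ++ ([e] ++ ρ)))) :
    s ≤ colOrd G (σ ++ ([e] ++ (π ++ ρ))) := by
  obtain ⟨v, hv⟩ := colOrd_exists G (by omega) h
  have hv_ne : v ≠ e := by
    intro hveq
    rw [hveq] at hv
    have := backDeg_le_degree G (σ ++ (π ++ ([e] ++ ρ))) e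
    omega
  have h1 := backDeg_le_of_forall G (v := v)
    (τ := σ ++ (π ++ ([e] ++ ρ))) (τ' := σ ++ ([e] ++ (π ++ ρ)))
    (fun u _ hpc => pc_shift_e hv_ne hpc)
  have h2 := le_colOrd G (σ ++ ([e] ++ (π ++ ρ))) v
  omega

/-- KE: a threshold value is preserved when a low-degree vertex is moved earlier. -/
lemma gameVal_shift_e : ∀ (n : ℕ) (t : Bool) {s : ℕ} (σ π ρ : List V) (e : V),
    G.degree e + 2 ≤ s →
    (unp (σ ++ ([e] ++ (π ++ ρ)))).card = n →
    s ≤ gameVal G t (σ ++ (π ++ ([e] ++ ρ))) →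
    s ≤ gameVal G t (σ ++ ([e] ++ (π ++ ρ))) := by
  intro n
  induction n using Nat.strong_induction_on with
  | _ n IH =>
    intro t s σ π ρ e hdeg hcard hval
    have hsame : unp (σ ++ (π ++ ([e] ++ ρ))) = unp (σ ++ ([e] ++ (π ++ ρ))) := by
      ext u
      simp only [mem_unp, List.mem_append, List.mem_singleton]
      tauto
    by_cases hne : (unp (σ ++ ([e] ++ (π ++ ρ)))).Nonempty
    · cases t with
      | true =>
        apply le_gameVal_true G hne
        intro a ha
        have ha' : a ∉ σ ++ ([e] ++ (π ++ ρ)) := mem_unp.mp ha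
        have ha0 : a ∈ unp (σ ++ (π ++ ([e] ++ ρ))) := by rw [hsame]; exact ha
        have hstep : s ≤ gameVal G false ((σ ++ (π ++ ([e] ++ ρ))) ++ [a]) :=
          le_trans hval (gameVal_true_le G ha0)
        have heq0 : (σ ++ (π ++ ([e] ++ ρ))) ++ [a] = σ ++ (π ++ ([e] ++ (ρ ++ [a]))) := by
          simp [List.append_assoc]
        have heq1 : (σ ++ ([e] ++ (π ++ ρ))) ++ [a] = σ ++ ([e] ++ (π ++ (ρ ++ [a]))) := by
          simp [List.append_assoc]
        rw [heq0] at hstep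
        have hcard' : (unp (σ ++ ([e] ++ (π ++ (ρ ++ [a]))))).card < n := by
          rw [← heq1]
          have := unp_card_succ (σ := σ ++ ([e] ++ (π ++ ρ))) (v := a) ha'
          omega
        have hres := IH _ hcard' false σ π (ρ ++ [a]) e hdeg rfl hstep
        rw [heq1]
        exact hres
      | false =>
        have hne' : (unp (σ ++ (π ++ ([e] ++ ρ)))).Nonempty := by rw [hsame]; exact hne
        obtain ⟨b, hb, hbeq⟩ := gameVal_false_exists G hne'
        have hb' : b ∈ unp (σ ++ ([e] ++ (π ++ ρ))) := by rw [← hsame]; exact hb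
        have hstep : s ≤ gameVal G true ((σ ++ (π ++ ([e] ++ ρ))) ++ [b]) := by
          rw [← hbeq]; exact hval
        have heq0 : (σ ++ (π ++ ([e] ++ ρ))) ++ [b] = σ ++ (π ++ ([e] ++ (ρ ++ [b]))) := by
          simp [List.append_assoc]
        have heq1 : (σ ++ ([e] ++ (π ++ ρ))) ++ [b] = σ ++ ([e] ++ (π ++ (ρ ++ [b]))) := by
          simp [List.append_assoc]
        rw [heq0] at hstep
        have hcard' : (unp (σ ++ ([e] ++ (π ++ (ρ ++ [b]))))).card < n := by
          rw [← heq1]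
          have := unp_card_succ (σ := σ ++ ([e] ++ (π ++ ρ))) (v := b) (mem_unp.mp hb')
          omega
        have hres := IH _ hcard' true σ π (ρ ++ [b]) e hdeg rfl hstep
        rw [← heq1] at hres
        exact le_trans hres (le_gameVal_false G hb')
    · rw [gameVal_terminal G hne]
      rw [gameVal_terminal G (by rw [hsame]; exact hne)] at hval
      exact colOrd_transfer G hdeg hval

/-- The key triple: AT (Alice-to-move value ≤ Bob-to-move value), and the two
insertion lemmas KA/KB (inserting a pre-played low-degree vertex preserves
value thresholds). -/
lemma AT_triple : ∀ n : ℕ,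
    (∀ σ : List V, (unp σ).card = n → gameVal G true σ ≤ gameVal G false σ) ∧
    (∀ (s : ℕ) (σ π : List V) (e : V), e ∉ σ ++ π → G.degree e + 2 ≤ s →
      (unp (σ ++ ([e] ++ π))).card = n → s ≤ gameVal G true (σ ++ π) →
      s ≤ gameVal G true (σ ++ ([e] ++ π))) ∧
    (∀ (s : ℕ) (σ π : List V) (e : V), e ∉ σ ++ π → G.degree e + 2 ≤ s →
      (unp (σ ++ ([e] ++ π))).card = n → s ≤ gameVal G false (σ ++ π) →
      s ≤ gameVal G false (σ ++ ([e] ++ π))) := by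
  intro n
  induction n using Nat.strong_induction_on with
  | _ n IH =>
    -- AT at level n
    have hAT : ∀ σ : List V, (unp σ).card = n →
        gameVal G true σ ≤ gameVal G false σ := by
      intro σ hcard
      by_cases hne : (unp σ).Nonempty
      · set s := gameVal G true σ with hs
        by_cases hlow : ∃ e ∈ unp σ, G.degree e + 2 ≤ s
        · obtain ⟨e, he, hdeg⟩ := hlow
          have he' : e ∉ σ := mem_unp.mp he
          have hcard' : (unp (σ ++ ([e] ++ []))).card = n - 1 := by
            have h1 : (σ : List V) ++ ([e] ++ []) = σ ++ [e] := by simp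
            rw [h1]
            have := unp_card_succ (σ := σ) (v := e) he'
            have hn1 : 1 ≤ n := by
              rw [← hcard]
              exact Finset.card_pos.mpr hne
            omega
          have hn1 : 1 ≤ n := by
            rw [← hcard]; exact Finset.card_pos.mpr hne
          have hKAprev := (IH (n - 1) (by omega)).2.1
          have hstep := hKAprev s σ [] e (by simpa using he') hdeg hcard'
            (by simp only [List.append_nil]; exact le_refl s)
          have h2 : (σ : List V) ++ ([e] ++ []) = σ ++ [e] := by simp
          rw [h2] at hstep
          exact le_trans hstep (le_gameVal_false G he)
        · push_neg at hlow
          exact gameVal_ge_of_min_degree G n σ false hcard hne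
            (fun u hu => by have := hlow u hu; omega)
      · rw [gameVal_terminal G hne, gameVal_terminal G hne]
    -- KB at level n  (uses hAT at level n, KA at level n-1)
    have hKB : ∀ (s : ℕ) (σ π : List V) (e : V), e ∉ σ ++ π → G.degree e + 2 ≤ s →
        (unp (σ ++ ([e] ++ π))).card = n → s ≤ gameVal G false (σ ++ π) →
        s ≤ gameVal G false (σ ++ ([e] ++ π)) := by
      intro s σ π e he hdeg hcard hval
      have heQ : e ∈ unp (σ ++ π) := mem_unp.mpr he
      have hRQ : unp (σ ++ ([e] ++ π)) = (unp (σ ++ π)).erase e := by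
        ext u
        simp only [mem_unp, Finset.mem_erase, List.mem_append, List.mem_singleton]
        tauto
      have hQcard : (unp (σ ++ π)).card = n + 1 := by
        have := Finset.card_erase_add_one heQ
        rw [← hRQ] at this
        omega
      have hneQ : (unp (σ ++ π)).Nonempty := ⟨e, heQ⟩
      obtain ⟨b, hbQ, hbeq⟩ := gameVal_false_exists G hneQ
      have hvalb : s ≤ gameVal G true ((σ ++ π) ++ [b]) := by rw [← hbeq]; exact hval
      by_cases hne : (unp (σ ++ ([e] ++ π))).Nonempty
      · by_cases hbe : b = e
        · subst hbe
          -- use KE then AT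
          have heq0 : (σ ++ π) ++ [b] = σ ++ (π ++ ([b] ++ [])) := by simp
          rw [heq0] at hvalb
          have hcard0 : (unp (σ ++ ([b] ++ (π ++ [])))).card = n := by
            simpa using hcard
          have hke := gameVal_shift_e G _ true σ π [] b hdeg hcard0 hvalb
          have heq1 : σ ++ ([b] ++ (π ++ [])) = σ ++ ([b] ++ π) := by simp
          rw [heq1] at hke
          exact le_trans hke (hAT _ hcard)
        · have hbR : b ∈ unp (σ ++ ([e] ++ π)) := by
            rw [hRQ]; exact Finset.mem_erase.mpr ⟨hbe, hbQ⟩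
          have heq0 : (σ ++ π) ++ [b] = σ ++ (π ++ [b]) := by simp
          rw [heq0] at hvalb
          have hcard' : (unp (σ ++ ([e] ++ (π ++ [b])))).card = n - 1 := by
            have heq1 : σ ++ ([e] ++ (π ++ [b])) = (σ ++ ([e] ++ π)) ++ [b] := by simp
            rw [heq1]
            have := unp_card_succ (σ := σ ++ ([e] ++ π)) (v := b) (mem_unp.mp hbR)
            have hn1 : 1 ≤ n := by rw [← hcard]; exact Finset.card_pos.mpr hne
            omega
          have hn1 : 1 ≤ n := by rw [← hcard]; exact Finset.card_pos.mpr hne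
          have hKAprev := (IH (n - 1) (by omega)).2.1
          have hstep := hKAprev s σ (π ++ [b]) e
            (by
              simp only [List.mem_append, List.mem_singleton] at he ⊢
              tauto)
            hdeg hcard' hvalb
          have heq2 : σ ++ ([e] ++ (π ++ [b])) = (σ ++ ([e] ++ π)) ++ [b] := by simp
          rw [heq2] at hstep
          exact le_trans hstep (le_gameVal_false G hbR)
      · -- terminal on R; then b = e necessarily
        have hbe : b = e := by
          by_contra hbe
          exact hne ⟨b, by rw [hRQ]; exact Finset.mem_erase.mpr ⟨hbe, hbQ⟩⟩
        subst hbe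
        have hterm : ¬ (unp ((σ ++ π) ++ [b])).Nonempty := by
          rw [unp_append (mem_unp.mp heQ)]
          intro ⟨u, hu⟩
          have : u ∈ unp (σ ++ ([b] ++ π)) := by
            rw [hRQ]; exact hu
          exact hne ⟨u, this⟩
        rw [gameVal_terminal G hterm] at hvalb
        rw [gameVal_terminal G hne]
        have heq0 : (σ ++ π) ++ [b] = σ ++ (π ++ ([b] ++ [])) := by simp
        rw [heq0] at hvalb
        have := colOrd_transfer G hdeg hvalb
        simpa using this
    -- KA at level n (uses KB at level n-1)
    have hKA : ∀ (s : ℕ) (σ π : List V) (e : V), e ∉ σ ++ π → G.degree e + 2 ≤ s →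
        (unp (σ ++ ([e] ++ π))).card = n → s ≤ gameVal G true (σ ++ π) →
        s ≤ gameVal G true (σ ++ ([e] ++ π)) := by
      intro s σ π e he hdeg hcard hval
      have heQ : e ∈ unp (σ ++ π) := mem_unp.mpr he
      have hRQ : unp (σ ++ ([e] ++ π)) = (unp (σ ++ π)).erase e := by
        ext u
        simp only [mem_unp, Finset.mem_erase, List.mem_append, List.mem_singleton]
        tauto
      by_cases hne : (unp (σ ++ ([e] ++ π))).Nonempty
      · apply le_gameVal_true G hne
        intro a ha
        have haQ : a ∈ unp (σ ++ π) := by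
          rw [hRQ] at ha; exact Finset.mem_of_mem_erase ha
        have hae : a ≠ e := by rw [hRQ] at ha; exact (Finset.mem_erase.mp ha).1
        have hstep : s ≤ gameVal G false ((σ ++ π) ++ [a]) :=
          le_trans hval (gameVal_true_le G haQ)
        have heq0 : (σ ++ π) ++ [a] = σ ++ (π ++ [a]) := by simp
        rw [heq0] at hstep
        have hn1 : 1 ≤ n := by rw [← hcard]; exact Finset.card_pos.mpr hne
        have hcard' : (unp (σ ++ ([e] ++ (π ++ [a])))).card = n - 1 := by
          have heq1 : σ ++ ([e] ++ (π ++ [a])) = (σ ++ ([e] ++ π)) ++ [a] := by simp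
          rw [heq1]
          have := unp_card_succ (σ := σ ++ ([e] ++ π)) (v := a) (mem_unp.mp ha)
          omega
        have hKBprev := (IH (n - 1) (by omega)).2.2
        have hres := hKBprev s σ (π ++ [a]) e
          (by
            simp only [List.mem_append, List.mem_singleton] at he ⊢
            push_neg
            exact ⟨fun h => he (Or.inl h), fun h => he (Or.inr h), fun h => absurd h.symm hae⟩)
          hdeg hcard' hstep
        have heq2 : σ ++ ([e] ++ (π ++ [a])) = (σ ++ ([e] ++ π)) ++ [a] := by simp
        rw [heq2] at hres
        exact hres
      · -- terminal on R
        have hneQ : (unp (σ ++ π)).Nonempty := ⟨e, heQ⟩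
        obtain ⟨a, haQ, haeq⟩ := gameVal_true_exists G hneQ
        have hae : a = e := by
          by_contra hae
          exact hne ⟨a, by rw [hRQ]; exact Finset.mem_erase.mpr ⟨hae, haQ⟩⟩
        subst hae
        have hvala : s ≤ gameVal G false ((σ ++ π) ++ [a]) := by rw [← haeq]; exact hval
        have hterm : ¬ (unp ((σ ++ π) ++ [a])).Nonempty := by
          rw [unp_append (mem_unp.mp haQ)]
          intro ⟨u, hu⟩
          exact hne ⟨u, by rw [hRQ]; exact hu⟩
        rw [gameVal_terminal G hterm] at hvala
        rw [gameVal_terminal G hne]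
        have heq0 : (σ ++ π) ++ [a] = σ ++ (π ++ ([a] ++ [])) := by simp
        rw [heq0] at hvala
        have := colOrd_transfer G hdeg hvala
        simpa using this
    exact ⟨hAT, hKA, hKB⟩

lemma gameVal_true_le_false (σ : List V) :
    gameVal G true σ ≤ gameVal G false σ :=
  (AT_triple G _).1 σ rfl

lemma pc_shift_back {α : Type*} {σ π ρ : List α} {c u v : α} (hu : u ≠ c) (hv : v ≠ c)
    (hpc : pairCond (σ ++ ([c] ++ (π ++ ρ))) u v) :
    pairCond (σ ++ (π ++ ([c] ++ ρ))) u v := by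
  rcases hpc.elim with h | h | ⟨hum, hvm⟩
  · exact h.append_left
  · rcases h.elim with h | h | ⟨hum, hvm⟩
    · exact absurd h pairCond.single
    · rcases h.elim with h | h | ⟨hum, hvm⟩
      · exact pairCond.append_right h.append_left
      · exact pairCond.append_right (pairCond.append_right (pairCond.append_right h))
      · exact pairCond.append_right (pairCond.intro' hum (List.mem_append_right _ hvm))
    · exact absurd (List.mem_singleton.mp hum) hu
  · have hvm' : v ∈ π ++ ([c] ++ ρ) := by
      rcases List.mem_append.mp hvm with h | h
      · exact absurd (List.mem_singleton.mp h) hv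
      · rcases List.mem_append.mp h with h | h
        · exact List.mem_append_left _ h
        · exact List.mem_append_right _ (List.mem_append_right _ h)
    exact pairCond.intro' hum hvm'

lemma pc_shift_back_c {α : Type*} {σ π ρ : List α} {c u : α}
    (hcσ : c ∉ σ) (hcπ : c ∉ π) (hcρ : c ∉ ρ)
    (hpc : pairCond (σ ++ ([c] ++ (π ++ ρ))) u c) :
    pairCond (σ ++ (π ++ ([c] ++ ρ))) u c := by
  rcases hpc.elim with h | h | ⟨hum, hvm⟩
  · exact absurd h.mem_right hcσ
  · rcases h.elim with h | h | ⟨hum, hvm⟩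
    · exact absurd h pairCond.single
    · rcases (List.mem_append.mp h.mem_right) with h' | h'
      · exact absurd h' hcπ
      · exact absurd h' hcρ
    · rcases List.mem_append.mp hvm with h' | h'
      · exact absurd h' hcπ
      · exact absurd h' hcρ
  · exact pairCond.intro' hum (List.mem_append_right _ (by simp))

lemma colOrd_shift_back {σ π ρ : List V} {c : V}
    (hcσ : c ∉ σ) (hcπ : c ∉ π) (hcρ : c ∉ ρ) :
    colOrd G (σ ++ ([c] ++ (π ++ ρ))) ≤ colOrd G (σ ++ (π ++ ([c] ++ ρ))) + 1 := by
  apply colOrd_le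
  intro v
  by_cases hv : v = c
  · subst hv
    have h1 := backDeg_le_of_forall G (v := v)
      (τ := σ ++ ([v] ++ (π ++ ρ))) (τ' := σ ++ (π ++ ([v] ++ ρ)))
      (fun u _ hpc => pc_shift_back_c hcσ hcπ hcρ hpc)
    have h2 := le_colOrd G (σ ++ (π ++ ([v] ++ ρ))) v
    omega
  · have h1 := backDeg_le_of_forall_add G (v := v) c
      (τ := σ ++ ([c] ++ (π ++ ρ))) (τ' := σ ++ (π ++ ([c] ++ ρ)))
      (fun u hu _ hpc => pc_shift_back hu hv hpc)
    have h2 := le_colOrd G (σ ++ (π ++ ([c] ++ ρ))) v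
    omega

lemma gameVal_shift_back : ∀ (n : ℕ) (t : Bool) (σ π ρ : List V) (c : V),
    c ∉ σ → c ∉ π → c ∉ ρ →
    (unp (σ ++ ([c] ++ (π ++ ρ)))).card = n →
    gameVal G t (σ ++ ([c] ++ (π ++ ρ))) ≤ gameVal G t (σ ++ (π ++ ([c] ++ ρ))) + 1 := by
  intro n
  induction n using Nat.strong_induction_on with
  | _ n IH =>
    intro t σ π ρ c hcσ hcπ hcρ hcard
    have hsame : unp (σ ++ ([c] ++ (π ++ ρ))) = unp (σ ++ (π ++ ([c] ++ ρ))) := by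
      ext u
      simp only [mem_unp, List.mem_append, List.mem_singleton]
      tauto
    by_cases hne : (unp (σ ++ ([c] ++ (π ++ ρ)))).Nonempty
    · cases t with
      | true =>
        have hne' : (unp (σ ++ (π ++ ([c] ++ ρ)))).Nonempty := by rw [← hsame]; exact hne
        obtain ⟨a, ha, haeq⟩ := gameVal_true_exists G hne'
        have haL : a ∈ unp (σ ++ ([c] ++ (π ++ ρ))) := by rw [hsame]; exact ha
        have hac : a ≠ c := by
          have := mem_unp.mp haL
          simp only [List.mem_append, List.mem_singleton] at this
          tauto
        have h1 : gameVal G true (σ ++ ([c] ++ (π ++ ρ))) ≤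
            gameVal G false ((σ ++ ([c] ++ (π ++ ρ))) ++ [a]) := gameVal_true_le G haL
        have heqL : (σ ++ ([c] ++ (π ++ ρ))) ++ [a] = σ ++ ([c] ++ (π ++ (ρ ++ [a]))) := by simp
        have heqR : (σ ++ (π ++ ([c] ++ ρ))) ++ [a] = σ ++ (π ++ ([c] ++ (ρ ++ [a]))) := by simp
        have hcard' : (unp (σ ++ ([c] ++ (π ++ (ρ ++ [a]))))).card < n := by
          rw [← heqL]
          have := unp_card_succ (σ := σ ++ ([c] ++ (π ++ ρ))) (v := a) (mem_unp.mp haL)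
          omega
        have h2 := IH _ hcard' false σ π (ρ ++ [a]) c hcσ hcπ
          (by
            simp only [List.mem_append, List.mem_singleton]
            push_neg
            exact ⟨hcρ, fun h => hac h.symm⟩)
          rfl
        rw [heqL] at h1
        rw [← heqR] at h2
        rw [haeq]
        omega
      | false =>
        apply gameVal_false_le G hne
        intro b hb
        have hb' : b ∈ unp (σ ++ (π ++ ([c] ++ ρ))) := by rw [← hsame]; exact hb
        have hbc : b ≠ c := by
          have := mem_unp.mp hb
          simp only [List.mem_append, List.mem_singleton] at this
          tauto
        have heqL : (σ ++ ([c] ++ (π ++ ρ))) ++ [b] = σ ++ ([c] ++ (π ++ (ρ ++ [b]))) := by simp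
        have heqR : (σ ++ (π ++ ([c] ++ ρ))) ++ [b] = σ ++ (π ++ ([c] ++ (ρ ++ [b]))) := by simp
        have hcard' : (unp (σ ++ ([c] ++ (π ++ (ρ ++ [b]))))).card < n := by
          rw [← heqL]
          have := unp_card_succ (σ := σ ++ ([c] ++ (π ++ ρ))) (v := b) (mem_unp.mp hb)
          omega
        have h2 := IH _ hcard' true σ π (ρ ++ [b]) c hcσ hcπ
          (by
            simp only [List.mem_append, List.mem_singleton]
            push_neg
            exact ⟨hcρ, fun h => hbc h.symm⟩)
          rfl
        have h3 : gameVal G true ((σ ++ (π ++ ([c] ++ ρ))) ++ [b]) ≤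
            gameVal G false (σ ++ (π ++ ([c] ++ ρ))) := le_gameVal_false G hb'
        rw [heqL]
        rw [← heqR] at h2
        omega
    · rw [gameVal_terminal G hne, gameVal_terminal G (by rw [hsame] at hne; exact hne)]
      exact colOrd_shift_back G hcσ hcπ hcρ

/-- T1': a single extra pre-played vertex costs at most 1. -/
lemma gameVal_insert_le : ∀ (n : ℕ) (t : Bool) (σ π : List V) (c : V),
    c ∉ σ ++ π →
    (unp (σ ++ ([c] ++ π))).card = n →
    gameVal G t (σ ++ ([c] ++ π)) ≤ gameVal G t (σ ++ π) + 1 := by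
  intro n
  induction n using Nat.strong_induction_on with
  | _ n IH =>
    intro t σ π c hc hcard
    have hcσ : c ∉ σ := fun h => hc (List.mem_append_left _ h)
    have hcπ : c ∉ π := fun h => hc (List.mem_append_right _ h)
    have hcQ : c ∈ unp (σ ++ π) := mem_unp.mpr hc
    have hRQ : unp (σ ++ ([c] ++ π)) = (unp (σ ++ π)).erase c := by
      ext u
      simp only [mem_unp, Finset.mem_erase, List.mem_append, List.mem_singleton]
      tauto
    by_cases hne : (unp (σ ++ ([c] ++ π))).Nonempty
    · have hn1 : 1 ≤ n := by rw [← hcard]; exact Finset.card_pos.mpr hne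
      cases t with
      | false =>
        apply gameVal_false_le G hne
        intro d hd
        have hdQ : d ∈ unp (σ ++ π) := by
          rw [hRQ] at hd; exact Finset.mem_of_mem_erase hd
        have hdc : d ≠ c := by rw [hRQ] at hd; exact (Finset.mem_erase.mp hd).1
        have heqL : (σ ++ ([c] ++ π)) ++ [d] = σ ++ ([c] ++ (π ++ [d])) := by simp
        have heqQ : (σ ++ π) ++ [d] = σ ++ (π ++ [d]) := by simp
        have hcard' : (unp (σ ++ ([c] ++ (π ++ [d])))).card < n := by
          rw [← heqL]
          have := unp_card_succ (σ := σ ++ ([c] ++ π)) (v := d) (mem_unp.mp hd)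
          omega
        have h2 := IH _ hcard' true σ (π ++ [d]) c
          (by
            simp only [List.mem_append, List.mem_singleton]
            push_neg
            exact ⟨hcσ, hcπ, fun h => hdc h.symm⟩)
          rfl
        have h3 : gameVal G true ((σ ++ π) ++ [d]) ≤ gameVal G false (σ ++ π) :=
          le_gameVal_false G hdQ
        rw [heqL]
        rw [heqQ] at h3
        omega
      | true =>
        have hneQ : (unp (σ ++ π)).Nonempty := ⟨c, hcQ⟩
        obtain ⟨a, haQ, haeq⟩ := gameVal_true_exists G hneQ
        by_cases hac : a = c
        · subst hac
          have h1 := gameVal_true_le_false G (σ ++ ([a] ++ π))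
          have h2 : gameVal G false (σ ++ ([a] ++ (π ++ []))) ≤
              gameVal G false (σ ++ (π ++ ([a] ++ []))) + 1 :=
            gameVal_shift_back G _ false σ π [] a hcσ hcπ (by simp) rfl
          have heq1 : σ ++ ([a] ++ (π ++ [])) = σ ++ ([a] ++ π) := by simp
          have heq2 : σ ++ (π ++ ([a] ++ [])) = (σ ++ π) ++ [a] := by simp
          rw [heq1, heq2] at h2
          rw [haeq]
          omega
        · have haR : a ∈ unp (σ ++ ([c] ++ π)) := by
            rw [hRQ]; exact Finset.mem_erase.mpr ⟨hac, haQ⟩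
          have h1 : gameVal G true (σ ++ ([c] ++ π)) ≤
              gameVal G false ((σ ++ ([c] ++ π)) ++ [a]) := gameVal_true_le G haR
          have heqL : (σ ++ ([c] ++ π)) ++ [a] = σ ++ ([c] ++ (π ++ [a])) := by simp
          have heqQ : (σ ++ π) ++ [a] = σ ++ (π ++ [a]) := by simp
          have hcard' : (unp (σ ++ ([c] ++ (π ++ [a])))).card < n := by
            rw [← heqL]
            have := unp_card_succ (σ := σ ++ ([c] ++ π)) (v := a) (mem_unp.mp haR)
            omega
          have h2 := IH _ hcard' false σ (π ++ [a]) c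
            (by
              simp only [List.mem_append, List.mem_singleton]
              push_neg
              exact ⟨hcσ, hcπ, fun h => hac h.symm⟩)
            rfl
          rw [heqL] at h1
          rw [← heqQ] at h2
          rw [haeq, heqQ]
          rw [heqQ] at h2
          omega
    · -- terminal on R : unp Q = {c}
      rw [gameVal_terminal G hne]
      have hterm : ¬ (unp ((σ ++ π) ++ [c])).Nonempty := by
        rw [unp_append hc]
        intro ⟨u, hu⟩
        exact hne ⟨u, by rw [hRQ]; exact hu⟩
      have hQval : gameVal G t (σ ++ π) = colOrd G ((σ ++ π) ++ [c]) := by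
        cases t with
        | true =>
          obtain ⟨a, haQ, haeq⟩ := gameVal_true_exists G ⟨c, hcQ⟩
          have : a = c := by
            by_contra hac
            exact hne ⟨a, by rw [hRQ]; exact Finset.mem_erase.mpr ⟨hac, haQ⟩⟩
          subst this
          rw [haeq, gameVal_terminal G hterm]
        | false =>
          obtain ⟨a, haQ, haeq⟩ := gameVal_false_exists G ⟨c, hcQ⟩
          have : a = c := by
            by_contra hac
            exact hne ⟨a, by rw [hRQ]; exact Finset.mem_erase.mpr ⟨hac, haQ⟩⟩
          subst this
          rw [haeq, gameVal_terminal G hterm]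
      rw [hQval]
      have h2 : colOrd G (σ ++ ([c] ++ (π ++ []))) ≤
          colOrd G (σ ++ (π ++ ([c] ++ []))) + 1 :=
        colOrd_shift_back G hcσ hcπ (by simp)
      have heq1 : σ ++ ([c] ++ (π ++ [])) = σ ++ ([c] ++ π) := by simp
      have heq2 : σ ++ (π ++ ([c] ++ [])) = (σ ++ π) ++ [c] := by simp
      rw [heq1, heq2] at h2
      exact h2

end Game

section Cross
variable {V : Type*} [Fintype V] (G : SimpleGraph V) (x : V)

lemma val_ne_x (v' : ↥({x}ᶜ : Set V)) : (v' : V) ≠ x := by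
  intro h
  have h2 := v'.2
  rw [h] at h2
  simp at h2

lemma mem_map_val {σ' : List ↥({x}ᶜ : Set V)} {v' : ↥({x}ᶜ : Set V)} :
    (v' : V) ∈ σ'.map Subtype.val ↔ v' ∈ σ' := by
  constructor
  · rintro h
    obtain ⟨u', hu', he⟩ := List.mem_map.mp h
    rwa [Subtype.coe_injective he] at hu'
  · exact fun h => List.mem_map_of_mem h

lemma induce_adj' {u v : ↥({x}ᶜ : Set V)} :
    (G.induce ({x}ᶜ : Set V)).Adj u v ↔ G.Adj u v := SimpleGraph.comap_adj

/-- colOrd comparison across the vertex deletion, with `x` inserted. -/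
lemma colOrd_cross (σ' ρ' : List ↥({x}ᶜ : Set V)) :
    colOrd (G.induce ({x}ᶜ : Set V)) (σ' ++ ρ') ≤
      colOrd G (σ'.map Subtype.val ++ ([x] ++ ρ'.map Subtype.val)) := by
  apply colOrd_le
  intro v'
  have hbd : backDeg (G.induce ({x}ᶜ : Set V)) (σ' ++ ρ') v' ≤
      backDeg G (σ'.map Subtype.val ++ ([x] ++ ρ'.map Subtype.val)) (v' : V) := by
    apply backDeg_le_map _ _ _ Subtype.coe_injective
    · intro u hadj
      exact (induce_adj' G x).mp hadj
    · intro u _ hpc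
      rcases hpc.elim with h | h | ⟨hum, hvm⟩
      · exact (h.map (f := Subtype.val)).append_left
      · exact pairCond.append_right (pairCond.append_right (h.map (f := Subtype.val)))
      · exact pairCond.intro' (List.mem_map_of_mem hum)
          (List.mem_append_right _ (List.mem_map_of_mem hvm))
  calc 1 + backDeg (G.induce ({x}ᶜ : Set V)) (σ' ++ ρ') v' ≤
      1 + backDeg G (σ'.map Subtype.val ++ ([x] ++ ρ'.map Subtype.val)) (v' : V) := by omega
    _ ≤ _ := le_colOrd G _ _

/-- C2: games on `G - x` vs games on `G` with `x` inserted in the middle. -/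
lemma crossC2 : ∀ (n : ℕ) (t : Bool) (σ' ρ' : List ↥({x}ᶜ : Set V)),
    (unp (σ' ++ ρ')).card = n →
    gameVal (G.induce ({x}ᶜ : Set V)) t (σ' ++ ρ') ≤
      gameVal G t (σ'.map Subtype.val ++ ([x] ++ ρ'.map Subtype.val)) := by
  intro n
  induction n using Nat.strong_induction_on with
  | _ n IH =>
    intro t σ' ρ' hcard
    set H := G.induce ({x}ᶜ : Set V) with hH
    set gl := σ'.map Subtype.val ++ ([x] ++ ρ'.map Subtype.val) with hgl
    have hmemgl : ∀ u' : ↥({x}ᶜ : Set V), (u' : V) ∈ gl ↔ u' ∈ σ' ++ ρ' := by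
      intro u'
      simp only [hgl, List.mem_append, List.mem_singleton, mem_map_val]
      constructor
      · rintro (h | h | h)
        · exact Or.inl h
        · exact absurd h (val_ne_x x u')
        · exact Or.inr h
      · rintro (h | h)
        · exact Or.inl h
        · exact Or.inr (Or.inr h)
    by_cases hne : (unp (σ' ++ ρ')).Nonempty
    · cases t with
      | true =>
        have hneG : (unp gl).Nonempty := by
          obtain ⟨a', ha'⟩ := hne
          exact ⟨(a' : V), mem_unp.mpr (fun h => (mem_unp.mp ha') ((hmemgl a').mp h))⟩
        obtain ⟨a, ha, haeq⟩ := gameVal_true_exists G hneG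
        have hax : a ≠ x := by
          intro h
          exact (mem_unp.mp ha) (by rw [h, hgl]; simp)
        have haS : a ∈ ({x}ᶜ : Set V) := by simpa using hax
        set a' : ↥({x}ᶜ : Set V) := ⟨a, haS⟩ with ha'
        have ha'H : a' ∈ unp (σ' ++ ρ') := by
          rw [mem_unp]
          intro h
          exact (mem_unp.mp ha) ((hmemgl a').mpr h)
        have h1 : gameVal H true (σ' ++ ρ') ≤ gameVal H false ((σ' ++ ρ') ++ [a']) :=
          gameVal_true_le H ha'H
        have heq1 : (σ' ++ ρ') ++ [a'] = σ' ++ (ρ' ++ [a']) := by simp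
        have hcard' : (unp (σ' ++ (ρ' ++ [a']))).card < n := by
          rw [← heq1]
          have := unp_card_succ (σ := σ' ++ ρ') (v := a') (mem_unp.mp ha'H)
          omega
        have h2 := IH _ hcard' false σ' (ρ' ++ [a']) rfl
        have heq2 : (ρ' ++ [a']).map Subtype.val = ρ'.map Subtype.val ++ [a] := by simp [ha']
        have heq3 : σ'.map Subtype.val ++ ([x] ++ (ρ'.map Subtype.val ++ [a])) =
            gl ++ [a] := by simp [hgl]
        rw [heq2, heq3] at h2
        rw [heq1] at h1
        rw [haeq]
        exact le_trans h1 h2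
      | false =>
        obtain ⟨b', hb', hbeq⟩ := gameVal_false_exists H hne
        have heq1 : (σ' ++ ρ') ++ [b'] = σ' ++ (ρ' ++ [b']) := by simp
        have hcard' : (unp (σ' ++ (ρ' ++ [b']))).card < n := by
          rw [← heq1]
          have := unp_card_succ (σ := σ' ++ ρ') (v := b') (mem_unp.mp hb')
          omega
        have h2 := IH _ hcard' true σ' (ρ' ++ [b']) rfl
        have heq2 : (ρ' ++ [b']).map Subtype.val = ρ'.map Subtype.val ++ [(b' : V)] := by simp
        have heq3 : σ'.map Subtype.val ++ ([x] ++ (ρ'.map Subtype.val ++ [(b' : V)])) =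
            gl ++ [(b' : V)] := by simp [hgl]
        rw [heq2, heq3] at h2
        have hbG : (b' : V) ∈ unp gl := by
          rw [mem_unp]
          intro h
          exact (mem_unp.mp hb') ((hmemgl b').mp h)
        have h3 : gameVal G true (gl ++ [(b' : V)]) ≤ gameVal G false gl :=
          le_gameVal_false G hbG
        rw [hbeq, heq1]
        exact le_trans h2 h3
    · have hneG : ¬ (unp gl).Nonempty := by
        intro ⟨u, hu⟩
        have hux : u ≠ x := by
          intro h
          exact (mem_unp.mp hu) (by rw [h, hgl]; simp)
        have huS : u ∈ ({x}ᶜ : Set V) := by simpa using hux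
        exact hne ⟨⟨u, huS⟩, mem_unp.mpr
          (fun h => (mem_unp.mp hu) ((hmemgl ⟨u, huS⟩).mpr h))⟩
      rw [gameVal_terminal H hne, gameVal_terminal G hneG]
      exact colOrd_cross G x σ' ρ'

/-- C3: deleting a vertex does not increase the game value (monotonicity). -/
lemma crossC3 : ∀ (n : ℕ) (t : Bool) (σ' : List ↥({x}ᶜ : Set V)),
    (unp σ').card = n →
    gameVal (G.induce ({x}ᶜ : Set V)) t σ' ≤ gameVal G t (σ'.map Subtype.val) := by
  intro n
  induction n using Nat.strong_induction_on with
  | _ n IH =>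
    intro t σ' hcard
    set H := G.induce ({x}ᶜ : Set V) with hH
    have hxm : x ∉ σ'.map Subtype.val := by
      intro h
      obtain ⟨u', -, he⟩ := List.mem_map.mp h
      exact val_ne_x x u' he
    have hneG : (unp (σ'.map Subtype.val)).Nonempty := ⟨x, mem_unp.mpr hxm⟩
    by_cases hne : (unp σ').Nonempty
    · cases t with
      | false =>
        obtain ⟨b', hb', hbeq⟩ := gameVal_false_exists H hne
        rw [hbeq]
        have hcard' : (unp (σ' ++ [b'])).card < n := by
          have := unp_card_succ (σ := σ') (v := b') (mem_unp.mp hb')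
          have : 1 ≤ n := by rw [← hcard]; exact Finset.card_pos.mpr hne
          have := unp_card_succ (σ := σ') (v := b') (mem_unp.mp hb')
          omega
        have h2 := IH _ hcard' true (σ' ++ [b']) rfl
        have heq : (σ' ++ [b']).map Subtype.val = σ'.map Subtype.val ++ [(b' : V)] := by simp
        rw [heq] at h2
        have hbG : (b' : V) ∈ unp (σ'.map Subtype.val) := by
          rw [mem_unp]
          intro h
          exact (mem_unp.mp hb') ((mem_map_val x).mp h)
        exact le_trans h2 (le_gameVal_false G hbG)
      | true =>
        obtain ⟨a, ha, haeq⟩ := gameVal_true_exists G hneG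
        rw [haeq]
        by_cases hax : a = x
        · subst hax
          have h1 : gameVal H true σ' ≤ gameVal H false σ' := gameVal_true_le_false H σ'
          obtain ⟨b', hb', hbeq⟩ := gameVal_false_exists H hne
          have h2 := crossC2 G a ((unp (σ' ++ [b'])).card) true σ' [b'] rfl
          have heq : σ'.map Subtype.val ++ ([a] ++ [b'].map Subtype.val) =
              (σ'.map Subtype.val ++ [a]) ++ [(b' : V)] := by simp
          rw [heq] at h2
          have hbG : (b' : V) ∈ unp (σ'.map Subtype.val ++ [a]) := by
            rw [mem_unp]
            intro h
            rcases List.mem_append.mp h with h | h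
            · exact (mem_unp.mp hb') ((mem_map_val a).mp h)
            · exact val_ne_x a b' (List.mem_singleton.mp h)
          have h3 : gameVal G true ((σ'.map Subtype.val ++ [a]) ++ [(b' : V)]) ≤
              gameVal G false (σ'.map Subtype.val ++ [a]) := le_gameVal_false G hbG
          rw [hbeq] at h1
          exact le_trans h1 (le_trans h2 h3)
        · have haS : a ∈ ({x}ᶜ : Set V) := by simpa using hax
          have ha'H : (⟨a, haS⟩ : ↥({x}ᶜ : Set V)) ∈ unp σ' := by
            rw [mem_unp]
            intro h
            exact (mem_unp.mp ha) (List.mem_map_of_mem h)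
          have h1 : gameVal H true σ' ≤ gameVal H false (σ' ++ [⟨a, haS⟩]) :=
            gameVal_true_le H ha'H
          have hcard' : (unp (σ' ++ [⟨a, haS⟩])).card < n := by
            have := unp_card_succ (σ := σ') (v := (⟨a, haS⟩ : ↥({x}ᶜ : Set V)))
              (mem_unp.mp ha'H)
            omega
          have h2 := IH _ hcard' false (σ' ++ [⟨a, haS⟩]) rfl
          have heq : (σ' ++ [(⟨a, haS⟩ : ↥({x}ᶜ : Set V))]).map Subtype.val = σ'.map Subtype.val ++ [a] := by simp
          rw [heq] at h2
          exact le_trans h1 h2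
    · -- H-side terminal; G-side has only x unplayed
      rw [gameVal_terminal H hne]
      have hU : ∀ u ∈ unp (σ'.map Subtype.val), u = x := by
        intro u hu
        by_contra hux
        have huS : u ∈ ({x}ᶜ : Set V) := by simpa using hux
        refine hne ⟨⟨u, huS⟩, mem_unp.mpr (fun h => ?_)⟩
        exact (mem_unp.mp hu) (List.mem_map_of_mem h)
      have hterm : ¬ (unp (σ'.map Subtype.val ++ [x])).Nonempty := by
        intro ⟨u, hu⟩
        have hu' : u ∈ unp (σ'.map Subtype.val) := unp_append_subset hu
        have := hU u hu'
        subst this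
        exact (mem_unp.mp hu) (by simp)
      have hcol : colOrd H σ' ≤ colOrd G (σ'.map Subtype.val ++ [x]) := by
        have := colOrd_cross G x σ' []
        simpa using this
      cases t with
      | true =>
        obtain ⟨a, ha, haeq⟩ := gameVal_true_exists G hneG
        have hax := hU a ha
        subst hax
        rw [haeq, gameVal_terminal G hterm]
        exact hcol
      | false =>
        obtain ⟨a, ha, haeq⟩ := gameVal_false_exists G hneG
        have hax := hU a ha
        subst hax
        rw [haeq, gameVal_terminal G hterm]
        exact hcol

/-- C1: pre-playing `x` first costs at most 1 relative to the deleted graph. -/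
lemma crossC1 : ∀ (n : ℕ) (t : Bool) (σ' : List ↥({x}ᶜ : Set V)),
    (unp σ').card = n →
    gameVal G t ([x] ++ σ'.map Subtype.val) ≤
      gameVal (G.induce ({x}ᶜ : Set V)) t σ' + 1 := by
  intro n
  induction n using Nat.strong_induction_on with
  | _ n IH =>
    intro t σ' hcard
    set H := G.induce ({x}ᶜ : Set V) with hH
    have hxm : x ∉ σ'.map Subtype.val := by
      intro h
      obtain ⟨u', -, he⟩ := List.mem_map.mp h
      exact val_ne_x x u' he
    have hmem : ∀ u : V, u ∈ unp ([x] ++ σ'.map Subtype.val) ↔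
        (u ≠ x ∧ u ∉ σ'.map Subtype.val) := by
      intro u
      rw [mem_unp]
      simp only [List.mem_append, List.mem_singleton]
      tauto
    by_cases hne : (unp σ').Nonempty
    · cases t with
      | true =>
        obtain ⟨a', ha', haeq⟩ := gameVal_true_exists H hne
        rw [haeq]
        have haG : (a' : V) ∈ unp ([x] ++ σ'.map Subtype.val) := by
          rw [hmem]
          exact ⟨val_ne_x x a', fun h => (mem_unp.mp ha') ((mem_map_val x).mp h)⟩
        have h1 : gameVal G true ([x] ++ σ'.map Subtype.val) ≤
            gameVal G false (([x] ++ σ'.map Subtype.val) ++ [(a' : V)]) :=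
          gameVal_true_le G haG
        have heq : ([x] ++ σ'.map Subtype.val) ++ [(a' : V)] =
            [x] ++ (σ' ++ [a']).map Subtype.val := by simp
        rw [heq] at h1
        have hcard' : (unp (σ' ++ [a'])).card < n := by
          have := unp_card_succ (σ := σ') (v := a') (mem_unp.mp ha')
          omega
        exact le_trans h1 (IH _ hcard' false (σ' ++ [a']) rfl)
      | false =>
        have hneG : (unp ([x] ++ σ'.map Subtype.val)).Nonempty := by
          obtain ⟨a', ha'⟩ := hne
          exact ⟨(a' : V), (hmem _).mpr
            ⟨val_ne_x x a', fun h => (mem_unp.mp ha') ((mem_map_val x).mp h)⟩⟩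
        obtain ⟨b, hb, hbeq⟩ := gameVal_false_exists G hneG
        rw [hbeq]
        have hbx : b ≠ x := ((hmem b).mp hb).1
        have hbS : b ∈ ({x}ᶜ : Set V) := by simpa using hbx
        have hb'H : (⟨b, hbS⟩ : ↥({x}ᶜ : Set V)) ∈ unp σ' := by
          rw [mem_unp]
          intro h
          exact ((hmem b).mp hb).2 (List.mem_map_of_mem h)
        have heq : ([x] ++ σ'.map Subtype.val) ++ [b] =
            [x] ++ (σ' ++ [(⟨b, hbS⟩ : ↥({x}ᶜ : Set V))]).map Subtype.val := by simp
        rw [heq]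
        have hcard' : (unp (σ' ++ [⟨b, hbS⟩])).card < n := by
          have := unp_card_succ (σ := σ') (v := (⟨b, hbS⟩ : ↥({x}ᶜ : Set V)))
            (mem_unp.mp hb'H)
          omega
        have h2 := IH _ hcard' true (σ' ++ [⟨b, hbS⟩]) rfl
        have h3 : gameVal H true (σ' ++ [⟨b, hbS⟩]) ≤ gameVal H false σ' :=
          le_gameVal_false H hb'H
        omega
    · -- terminal on both sides
      have hneG : ¬ (unp ([x] ++ σ'.map Subtype.val)).Nonempty := by
        intro ⟨u, hu⟩
        have h1 := (hmem u).mp hu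
        have huS : u ∈ ({x}ᶜ : Set V) := by simpa using h1.1
        exact hne ⟨⟨u, huS⟩, mem_unp.mpr (fun h => h1.2 (List.mem_map_of_mem h))⟩
      rw [gameVal_terminal G hneG, gameVal_terminal H hne]
      apply colOrd_le
      intro v
      by_cases hvx : v = x
      · subst hvx
        have hbd : backDeg G ([v] ++ σ'.map Subtype.val) v = 0 := by
          have : ([v] ++ σ'.map Subtype.val) = v :: σ'.map Subtype.val := by simp
          rw [this]
          exact backDeg_head_eq_zero G hxm
        rw [hbd]
        omega
      · have hvS : v ∈ ({x}ᶜ : Set V) := by simpa using hvx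
        set v' : ↥({x}ᶜ : Set V) := ⟨v, hvS⟩ with hv'
        have hbd : backDeg G ([x] ++ σ'.map Subtype.val) v ≤ backDeg H σ' v' + 1 := by
          have := backDeg_map_le_add H G Subtype.val
            (τ := σ') (τ' := [x] ++ σ'.map Subtype.val) (v := v') x ?_
          · exact this
          · intro u hux hadj hpc
            rcases hpc.elim with h | h | ⟨hum, hvm⟩
            · exact absurd h pairCond.single
            · have humem : u ∈ σ'.map Subtype.val := h.mem_left
              obtain ⟨u₁, hu₁, he⟩ := List.mem_map.mp humem
              subst he
              refine ⟨u₁, rfl, ?_, ?_⟩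
              · exact (induce_adj' G x).mpr hadj
              · exact pairCond.of_map Subtype.coe_injective h
            · exact absurd (List.mem_singleton.mp hum) hux
        have h2 := le_colOrd H σ' v'
        omega

end Cross

/-- For any vertex `x` of `G`,
`gcol(G − x) ≤ gcol(G) ≤ gcol(G − x) + 2`, where `G − x` is the induced
subgraph of `G` obtained by deleting `x`. -/
theorem gcol_deleteVertex {V : Type*} [Fintype V] (G : SimpleGraph V)
    (x : V) :
    gcol (G.induce ({x}ᶜ : Set V)) ≤ gcol G ∧
      gcol G ≤ gcol (G.induce ({x}ᶜ : Set V)) + 2 := by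
  constructor
  · have h := crossC3 G x _ true ([] : List ↥({x}ᶜ : Set V)) rfl
    simpa [gcol] using h
  · set H := G.induce ({x}ᶜ : Set V) with hH
    have hx0 : x ∈ unp ([] : List V) := mem_unp.mpr (by simp)
    have h1 : gameVal G true [] ≤ gameVal G false ([] ++ [x]) := gameVal_true_le G hx0
    have h1' : gcol G ≤ gameVal G false [x] := by simpa [gcol] using h1
    by_cases hne : (unp ([x] : List V)).Nonempty
    · have h2 : gameVal G false [x] ≤ gcol H + 2 := by
        apply gameVal_false_le G hne
        intro b hb
        have hbx : b ≠ x := by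
          have := mem_unp.mp hb; simp at this; exact this
        have hbS : b ∈ ({x}ᶜ : Set V) := by simpa using hbx
        have hC1 := crossC1 G x _ true [(⟨b, hbS⟩ : ↥({x}ᶜ : Set V))] rfl
        have heq : [x] ++ ([(⟨b, hbS⟩ : ↥({x}ᶜ : Set V))].map Subtype.val) =
            [x] ++ [b] := by simp
        rw [heq] at hC1
        have hT1 : gameVal H true [(⟨b, hbS⟩ : ↥({x}ᶜ : Set V))] ≤
            gameVal H true ([] : List ↥({x}ᶜ : Set V)) + 1 := by
          have := gameVal_insert_le H _ true [] []
            (⟨b, hbS⟩ : ↥({x}ᶜ : Set V)) (by simp) rfl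
          simpa using this
        have hC1' : gameVal G true ([x] ++ [b]) ≤
            gameVal H true [(⟨b, hbS⟩ : ↥({x}ᶜ : Set V))] + 1 := by
          simpa using hC1
        have hgc : gcol H = gameVal H true ([] : List ↥({x}ᶜ : Set V)) := rfl
        omega
      omega
    · have h2 : gameVal G false [x] = colOrd G [x] := gameVal_terminal G hne false
      have h3 : colOrd G [x] ≤ 1 := by
        apply colOrd_le
        intro v
        by_cases hvx : v = x
        · subst hvx
          have hbd : backDeg G [v] v = 0 := by
            have h4 : ([v] : List V) = v :: [] := rfl
            rw [h4]
            exact backDeg_head_eq_zero G (by simp)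
          omega
        · exact absurd ⟨v, mem_unp.mpr (by simp [hvx])⟩ hne
      omega
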